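/- Let (K, v) be a separably closed valued field of characteristic p > 0 with nontrivial value group Γ = v(K^×) ≠ {0}, and suppose K is imperfect (K^p ≠ K) with [K : K^p] finite. Then there do not exist a finite tuple (c_1, …, c_N) of elements of K that is a basis of K as a vector space over the subfield K^p, together with an element δ_0 ∈ Γ, such that for every a ∈ K, writing a = ∑_{i=1}^{N} a_i^p·c_i with a_i ∈ K, one has v(a) ≤ min_{1 ≤ i ≤ N} (p·v(a_i) + v(c_i) + δ_0) (where v(0) = ∞, so terms with a_i = 0 do not contribute to the minimum). -/

import Mathlib

/-!
Since `K` is separably closed and `Γ ≠ 0`, `K^p` is dense in `K`: if `v c` is large, a root `y`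
of the separable polynomial `X ^ p - c X - a` satisfies `a - y ^ p = -c y`, and `v (c y)` is
large too.

Given a weak σ-valuation basis, write `1 = ∑ e_k ^ p c_k` with `e_i c_i ≠ 0`, and pick `j ≠ i`
with `c_j ≠ 0` (it exists as `K ≠ K^p`). Choose `z` with `v (c_j - z ^ p)` very large; then
`v (z ^ p) = v c_j`. The representation `c_j - z ^ p = ∑ (δ_jk - z e_k) ^ p c_k` has `i`-th
coordinate `-z e_i`, so the basis inequality bounds `v (c_j - z ^ p)` by
`v c_j + p v e_i + v c_i + δ₀`, a contradiction.
-/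

/-- A valuation on a field `K` with values in the linearly ordered abelian group `Γ`
(together with `∞ = ⊤`), surjective onto `Γ`, i.e. `Γ = v(K^×)`. -/
structure ValuedFieldAux (K : Type*) [Field K] (Γ : Type*)
    [AddCommGroup Γ] [LinearOrder Γ] [IsOrderedAddMonoid Γ] where
  v : K → WithTop Γ
  v_eq_top_iff : ∀ x : K, v x = ⊤ ↔ x = 0
  v_mul : ∀ x y : K, v (x * y) = v x + v y
  v_add : ∀ x y : K, min (v x) (v y) ≤ v (x + y)
  v_surj : ∀ γ : Γ, ∃ x : K, v x = (γ : WithTop Γ)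

lemma lt_add_of_min_le_nsmul {Γ : Type*} [AddCommGroup Γ] [LinearOrder Γ] [IsOrderedAddMonoid Γ]
    {p : ℕ} (hp : 0 < p) {γ α s η : Γ} (hγ : (p - 1) • γ < p • s) (hα : p • γ < p • s + α)
    (h : min (s + η) α ≤ p • η) : γ < s + η := by
  have hsucc : ∀ x : Γ, p • x = (p - 1) • x + x := fun x => by
    rw [← succ_nsmul, Nat.sub_add_cancel hp]
  by_contra! hle
  rcases min_le_iff.mp h with h | h
  · have hs : s ≤ (p - 1) • η := le_of_add_le_add_right (hsucc η ▸ h)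
    refine hγ.not_ge ?_
    calc p • s = (p - 1) • s + s := hsucc s
      _ ≤ (p - 1) • s + (p - 1) • η := by gcongr
      _ = (p - 1) • (s + η) := (nsmul_add s η _).symm
      _ ≤ (p - 1) • γ := nsmul_le_nsmul_right hle _
  · refine hα.not_ge ?_
    calc p • s + α ≤ p • s + p • η := by gcongr
      _ = p • (s + η) := (nsmul_add s η _).symm
      _ ≤ p • γ := nsmul_le_nsmul_right hle _

lemma exists_ne_ne_zero_of_forall_eq_sum_pow_mul {K : Type*} [Field K] {p : ℕ} {ι : Type*}
    [Fintype ι] {c : ι → K} (hspan : ∀ a : K, ∃ w : ι → K, a = ∑ k, w k ^ p * c k)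
    (himp : ∃ x : K, ∀ y : K, y ^ p ≠ x) (i : ι) : ∃ j ≠ i, c j ≠ 0 := by
  by_contra! h
  have hsingle : ∀ w : ι → K, ∑ k, w k ^ p * c k = w i ^ p * c i := fun w =>
    Finset.sum_eq_single_of_mem i (Finset.mem_univ i) fun k _ hk => by rw [h k hk, mul_zero]
  obtain ⟨u, hu⟩ := hspan 1
  obtain ⟨x, hx⟩ := himp
  obtain ⟨w, hw⟩ := hspan x
  rw [hsingle] at hu hw
  apply hx (w i * (u i)⁻¹)
  rw [mul_pow, inv_pow, hw, ← eq_inv_of_mul_eq_one_right hu.symm]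

namespace ValuedFieldAux

variable {K : Type*} [Field K] {Γ : Type*} [AddCommGroup Γ] [LinearOrder Γ] [IsOrderedAddMonoid Γ]
  (vf : ValuedFieldAux K Γ)

lemma v_zero : vf.v 0 = ⊤ := (vf.v_eq_top_iff 0).mpr rfl

lemma v_ne_top {x : K} (hx : x ≠ 0) : vf.v x ≠ ⊤ := mt (vf.v_eq_top_iff x).mp hx

lemma v_one : vf.v 1 = 0 := by
  obtain ⟨γ, hγ⟩ := WithTop.ne_top_iff_exists.mp (vf.v_ne_top one_ne_zero)
  have h := vf.v_mul 1 1
  rw [one_mul, ← hγ, ← WithTop.coe_add, WithTop.coe_inj, left_eq_add] at h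
  rw [← hγ, h, WithTop.coe_zero]

def toAddValuation : AddValuation K (WithTop Γ) :=
  AddValuation.of vf.v vf.v_zero vf.v_one vf.v_add vf.v_mul

lemma v_neg (x : K) : vf.v (-x) = vf.v x := vf.toAddValuation.map_neg x

lemma v_pow (x : K) (n : ℕ) : vf.v (x ^ n) = n • vf.v x := vf.toAddValuation.map_pow x n

lemma v_eq_of_lt_v_sub {x y : K} (h : vf.v x < vf.v (x - y)) : vf.v y = vf.v x :=
  vf.toAddValuation.map_eq_of_lt_sub (by rwa [AddValuation.map_sub_swap])

lemma exists_lt_v_sub_pow {p : ℕ} (hp : p.Prime) [CharP K p] [IsSepClosed K]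
    (hΓ : ∃ γ : Γ, γ ≠ 0) (a : K) (γ : Γ) : ∃ z : K, (γ : WithTop Γ) < vf.v (a - z ^ p) := by
  rcases eq_or_ne a 0 with rfl | ha
  · exact ⟨0, by simp [zero_pow hp.ne_zero, vf.v_zero]⟩
  obtain ⟨α, hα⟩ := WithTop.ne_top_iff_exists.mp (vf.v_ne_top ha)
  obtain ⟨g, hg⟩ := hΓ
  have : Nontrivial Γ := ⟨⟨g, 0, hg⟩⟩
  obtain ⟨s, hs⟩ := exists_gt (max (max ((p - 1) • γ) (p • γ - α)) 0)
  have hps := (max_lt_iff.mp hs).1.trans_le (le_self_nsmul (max_lt_iff.mp hs).2.le hp.ne_zero)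
  obtain ⟨c, hc⟩ := vf.v_surj s
  have hc0 : c ≠ 0 := by
    rintro rfl
    exact WithTop.top_ne_coe (vf.v_zero ▸ hc)
  obtain ⟨y, hy⟩ := IsSepClosed.exists_root_C_mul_X_pow_add_C_mul_X_add_C' p p 1 (-c) (-a)
    dvd_rfl hp.two_le (neg_ne_zero.mpr hc0)
  have hyp : y ^ p = c * y + a := by linear_combination hy
  refine ⟨y, ?_⟩
  rw [show a - y ^ p = -(c * y) by rw [hyp]; ring, vf.v_neg, vf.v_mul, hc]
  rcases eq_or_ne y 0 with rfl | hy0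
  · simp [vf.v_zero]
  obtain ⟨η, hη⟩ := WithTop.ne_top_iff_exists.mp (vf.v_ne_top hy0)
  have hmin : min (s + η) α ≤ p • η := by
    have h := vf.v_add (c * y) a
    rw [← hyp, vf.v_pow, vf.v_mul, hc, ← hη, ← hα] at h
    exact_mod_cast h
  rw [← hη, ← WithTop.coe_add, WithTop.coe_lt_coe]
  obtain ⟨hsγ, hsα⟩ := max_lt_iff.mp hps
  exact lt_add_of_min_le_nsmul hp.pos hsγ (sub_lt_iff_lt_add.mp hsα) hmin

lemma exists_lt_v_sum_pow_mul {p : ℕ} (hp : p.Prime) [CharP K p] [IsSepClosed K]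
    (hΓ : ∃ γ : Γ, γ ≠ 0) {ι : Type*} [Fintype ι] [DecidableEq ι] {c e : ι → K}
    (he : 1 = ∑ k, e k ^ p * c k) {i j : ι} (hij : i ≠ j) (hei : e i ≠ 0) (hci : c i ≠ 0)
    (hcj : c j ≠ 0) (δ₀ : Γ) :
    ∃ w : ι → K, p • vf.v (w i) + vf.v (c i) + δ₀ < vf.v (∑ k, w k ^ p * c k) := by
  set T := vf.v (c j) + (p • vf.v (e i) + vf.v (c i) + δ₀) with hT
  have hT_ne_top : max (vf.v (c j)) T ≠ ⊤ := by
    simp only [hT, ← vf.v_pow, ne_eq, max_eq_top, WithTop.add_eq_top, WithTop.coe_ne_top,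
      vf.v_ne_top hcj, vf.v_ne_top hci, vf.v_ne_top (pow_ne_zero p hei), or_self, not_false_eq_true]
  obtain ⟨γ, hγ⟩ := WithTop.ne_top_iff_exists.mp hT_ne_top
  obtain ⟨z, hz⟩ := vf.exists_lt_v_sub_pow hp hΓ (c j) γ
  obtain ⟨hzj, hzT⟩ := max_lt_iff.mp (hγ ▸ hz)
  have hvz : vf.v (z ^ p) = vf.v (c j) := vf.v_eq_of_lt_v_sub hzj
  set w : ι → K := Pi.single j 1 - z • e
  refine ⟨w, ?_⟩
  have hsum : ∑ k, w k ^ p * c k = c j - z ^ p := by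
    have := Fact.mk hp
    have hwp : ∀ k, w k ^ p = (Pi.single j 1 : ι → K) k - z ^ p * e k ^ p := fun k => by
      rw [show w k = (Pi.single j 1 : ι → K) k - z * e k from rfl, sub_pow_char, mul_pow]
      rcases eq_or_ne k j with rfl | hk
      · simp
      · simp [hk, hp.ne_zero]
    simp_rw [hwp, sub_mul, Finset.sum_sub_distrib, mul_assoc, ← Finset.mul_sum, ← he, mul_one]
    simp [Pi.single_apply]
  have hwi : w i = -(z * e i) := by
    simp [w, hij]
  rw [hsum, hwi, vf.v_neg, vf.v_mul, nsmul_add, ← vf.v_pow, hvz]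
  simpa only [hT, add_assoc] using hzT

end ValuedFieldAux

theorem stmt_9_general (p : ℕ) (hp : p.Prime) (K : Type*) [Field K] [CharP K p] [IsSepClosed K]
    (Γ : Type*) [AddCommGroup Γ] [LinearOrder Γ] [IsOrderedAddMonoid Γ] (vf : ValuedFieldAux K Γ)
    (hΓ : ∃ γ : Γ, γ ≠ 0)
    (himp : ∃ x : K, ∀ y : K, y ^ p ≠ x) :
    ¬ ∃ (N : ℕ) (c : Fin N → K) (δ₀ : Γ),
        (∀ a : K, ∃! w : Fin N → K, a = ∑ i, (w i) ^ p * c i) ∧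
        (∀ (a : K) (w : Fin N → K), a = ∑ i, (w i) ^ p * c i →
          vf.v a ≤ Finset.univ.inf
            (fun i => p • vf.v (w i) + vf.v (c i) + (δ₀ : WithTop Γ))) := by
  rintro ⟨N, c, δ₀, hrepr, hbound⟩
  obtain ⟨e, he, -⟩ := hrepr 1
  obtain ⟨i, -, hi⟩ := Finset.exists_ne_zero_of_sum_ne_zero (he ▸ one_ne_zero)
  obtain ⟨hei, hci⟩ := mul_ne_zero_iff.mp hi
  obtain ⟨j, hji, hcj⟩ :=
    exists_ne_ne_zero_of_forall_eq_sum_pow_mul (fun a => (hrepr a).exists) himp i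
  obtain ⟨w, hw⟩ := vf.exists_lt_v_sum_pow_mul hp hΓ he hji.symm
    (pow_ne_zero_iff hp.ne_zero |>.mp hei) hci hcj δ₀
  exact (hbound _ w rfl |>.trans (Finset.inf_le (Finset.mem_univ i))).not_gt hw

/-- Let `(K, v)` be a separably closed valued field of characteristic
`p > 0` with nontrivial value group, `K` imperfect with `[K : K^p]` finite. Then there
is no finite tuple `(c_1, …, c_N)` which is a basis of `K` over `K^p` together with
`δ₀ ∈ Γ` such that for every `a = ∑ a_i^p·c_i` one has
`v a ≤ min_i (p·v(a_i) + v(c_i) + δ₀)` (a "weak σ-valuation basis"). -/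
theorem stmt_9 (p : ℕ) (hp : p.Prime) (K : Type*) [Field K] [CharP K p] [IsSepClosed K]
    (Γ : Type*) [AddCommGroup Γ] [LinearOrder Γ] [IsOrderedAddMonoid Γ] (vf : ValuedFieldAux K Γ)
    (hΓ : ∃ γ : Γ, γ ≠ 0)
    (himp : ∃ x : K, ∀ y : K, y ^ p ≠ x)
    (hfin : ∃ (N : ℕ) (c : Fin N → K), ∀ a : K, ∃ w : Fin N → K,
      a = ∑ i, (w i) ^ p * c i) :
    ¬ ∃ (N : ℕ) (c : Fin N → K) (δ₀ : Γ),
        (∀ a : K, ∃! w : Fin N → K, a = ∑ i, (w i) ^ p * c i) ∧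
        (∀ (a : K) (w : Fin N → K), a = ∑ i, (w i) ^ p * c i →
          vf.v a ≤ Finset.univ.inf
            (fun i => p • vf.v (w i) + vf.v (c i) + (δ₀ : WithTop Γ))) :=
  stmt_9_general p hp K Γ vf hΓ himp
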